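/- Let Γ ≤ ℝ be a nonzero subgroup, and suppose Γ is divisible. Then for any Γ-admissible cone σ in N_ℝ × ℝ_{≥0} meeting N_ℝ × {1}, every vertex of the polyhedron P = π(σ ∩ (N_ℝ × {1})) lies in N_{ℚΓ} = N ⊗ ℚΓ; in particular, if Γ is divisible, every vertex of P lies in N_Γ. -/
import Mathlib


open scoped BigOperators

noncomputable def latticePair {n : ℕ} (u : Fin n → ℤ) (w : Fin n → ℝ) : ℝ :=
  ∑ i, (u i : ℝ) * w i

def HasNoLine {E : Type*} [AddCommGroup E] [Module ℝ E] (s : Set E) : Prop :=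
  ¬ ∃ (x v : E), v ≠ 0 ∧ ∀ t : ℝ, x + t • v ∈ s

def IsGammaAdmissibleCone {n : ℕ} (Γ : AddSubgroup ℝ) (σ : Set ((Fin n → ℝ) × ℝ)) : Prop :=
  HasNoLine σ ∧ ∃ (m : ℕ) (u : Fin m → Fin n → ℤ) (γ : Fin m → ℝ),
    (∀ i, γ i ∈ Γ) ∧
    σ = {p : (Fin n → ℝ) × ℝ | 0 ≤ p.2 ∧ ∀ i, 0 ≤ latticePair (u i) p.1 + γ i * p.2}

/-- A polyhedron `P ⊆ N_ℝ` is `Γ`-rational if it is cut out by finitely many inequalities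
`⟨u_i, w⟩ ≥ γ_i` with `u_i ∈ M` and `γ_i ∈ Γ`. -/
def IsGammaRationalPolyhedron {n : ℕ} (Γ : AddSubgroup ℝ) (P : Set (Fin n → ℝ)) : Prop :=
  ∃ (m : ℕ) (u : Fin m → Fin n → ℤ) (γ : Fin m → ℝ),
    (∀ i, γ i ∈ Γ) ∧ P = {w | ∀ i, γ i ≤ latticePair (u i) w}

/-- `Q` is a face of the polyhedron `P` if it is the locus in `P` where some linear functional,
bounded below on `P`, attains its minimum value. -/
def IsPolyFaceOf {n : ℕ} (Q P : Set (Fin n → ℝ)) : Prop :=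
  ∃ (ℓ : (Fin n → ℝ) →ₗ[ℝ] ℝ) (c : ℝ), (∀ w ∈ P, c ≤ ℓ w) ∧ Q = {w ∈ P | ℓ w = c}

lemma latticePair_add {n : ℕ} (u : Fin n → ℤ) (a b : Fin n → ℝ) :
    latticePair u (a + b) = latticePair u a + latticePair u b := by
  simp [latticePair, mul_add, Finset.sum_add_distrib]

lemma latticePair_smul {n : ℕ} (u : Fin n → ℤ) (t : ℝ) (a : Fin n → ℝ) :
    latticePair u (t • a) = t * latticePair u a := by
  simp [latticePair, Finset.mul_sum, mul_left_comm]

lemma rat_mul_mem (Γ : AddSubgroup ℝ)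
    (hdiv : ∀ γ ∈ Γ, ∀ k : ℕ, 0 < k → ∃ δ ∈ Γ, (k : ℝ) * δ = γ)
    (q : ℚ) {γ : ℝ} (hγ : γ ∈ Γ) : (q : ℝ) * γ ∈ Γ := by
  obtain ⟨δ, hδ, hδγ⟩ := hdiv γ hγ q.den q.pos
  have : (q : ℝ) * γ = (q.num : ℝ) * δ := by
    rw [← hδγ]
    rw [← mul_assoc]
    congr 1
    have := Rat.mul_den_eq_num q
    calc (q:ℝ) * (q.den:ℝ) = ((q * q.den : ℚ) : ℝ) := by push_cast; ring
      _ = (q.num : ℝ) := by rw [this]; push_cast; ring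
  rw [this, ← zsmul_eq_mul]
  exact AddSubgroup.zsmul_mem Γ hδ _

lemma span_top_of_pairing {n : ℕ} {ι : Type*} [Fintype ι] (u : ι → Fin n → ℚ)
    (h : ∀ v : Fin n → ℚ, (∀ i, ∑ j, u i j * v j = 0) → v = 0) :
    Submodule.span ℚ (Set.range u) = ⊤ := by
  by_contra hne
  obtain ⟨f, hf0, hf⟩ := (Submodule.span ℚ (Set.range u)).exists_le_ker_of_lt_top
    (lt_top_iff_ne_top.2 hne)
  set v : Fin n → ℚ := fun j => f (fun j' => if j = j' then 1 else 0) with hv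
  have hfx : ∀ x, f x = ∑ j, x j * v j := by
    intro x
    rw [LinearMap.pi_apply_eq_sum_univ]
    simp [hv, smul_eq_mul]
  have hv0 : v = 0 := by
    refine h v fun i => ?_
    have : f (u i) = 0 := hf (Submodule.subset_span ⟨i, rfl⟩)
    rw [hfx] at this
    exact this
  apply hf0
  ext x
  simp [hfx, hv0]

/-- Suppose `Γ ≤ ℝ` is a nonzero divisible subgroup and `σ` is a `Γ`-admissible cone in
`N_ℝ × ℝ_{≥0}` meeting `N_ℝ × {1}`.  Then every vertex of `P = π(σ ∩ (N_ℝ × {1}))` lies in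
`N_Γ = N ⊗ Γ` (which equals `N ⊗ ℚΓ` since `Γ` is divisible). -/
theorem vertices_in_N_Gamma {n : ℕ} (Γ : AddSubgroup ℝ) (hΓ : Γ ≠ ⊥)
    (hdiv : ∀ γ ∈ Γ, ∀ k : ℕ, 0 < k → ∃ δ ∈ Γ, (k : ℝ) * δ = γ)
    (σ : Set ((Fin n → ℝ) × ℝ)) (hσ : IsGammaAdmissibleCone Γ σ)
    (hmeet : ∃ w : Fin n → ℝ, (w, (1 : ℝ)) ∈ σ) :
    ∀ w : Fin n → ℝ, IsPolyFaceOf {w} {w' : Fin n → ℝ | (w', (1 : ℝ)) ∈ σ} →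
      ∀ i, w i ∈ Γ := by
  classical
  obtain ⟨-, m, u, γ, hγ, hσeq⟩ := hσ
  intro w hface j
  obtain ⟨ℓ, c, hc, hQ⟩ := hface
  have hwQ : w ∈ {w' ∈ {w' : Fin n → ℝ | (w', (1:ℝ)) ∈ σ} | ℓ w' = c} := by
    rw [← hQ]; exact rfl
  have hwP : (w, (1:ℝ)) ∈ σ := hwQ.1
  have hlw : ℓ w = c := hwQ.2
  have hmem : ∀ v : Fin n → ℝ, (v, (1:ℝ)) ∈ σ ↔ ∀ i, 0 ≤ latticePair (u i) v + γ i := by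
    intro v
    rw [hσeq]
    simp only [Set.mem_setOf_eq, mul_one]
    exact ⟨fun h => h.2, fun h => ⟨zero_le_one, h⟩⟩
  set g : Fin m → ℝ := fun i => latticePair (u i) w + γ i with hg
  have hg0 : ∀ i, 0 ≤ g i := (hmem w).1 hwP
  -- Key claim: any direction pairing to zero with all active constraints is zero
  have key : ∀ v : Fin n → ℝ, (∀ i, g i = 0 → latticePair (u i) v = 0) → v = 0 := by
    intro v hv
    set b : Fin m → ℝ := fun i => |latticePair (u i) v| with hb
    set δ : Fin m → ℝ := fun i => if g i = 0 then 1 else g i / (b i + 1) with hδ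
    have hδpos : ∀ i, 0 < δ i := by
      intro i
      simp only [hδ]
      split
      · exact one_pos
      · exact div_pos (lt_of_le_of_ne (hg0 i) (Ne.symm ‹_›)) (by positivity)
    set ε : ℝ := if h : (Finset.univ : Finset (Fin m)).Nonempty
      then min 1 (Finset.univ.inf' h δ) else 1 with hε
    have hεpos : 0 < ε := by
      rw [hε]
      split
      · exact lt_min one_pos ((Finset.lt_inf'_iff _).2 fun i _ => hδpos i)
      · exact one_pos
    have hεδ : ∀ i : Fin m, ε ≤ δ i := by
      intro i
      rw [hε, dif_pos ⟨i, Finset.mem_univ i⟩]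
      exact le_trans (min_le_right _ _) (Finset.inf'_le _ (Finset.mem_univ i))
    have hpert : ∀ s : ℝ, s = ε ∨ s = -ε → (w + s • v, (1:ℝ)) ∈ σ := by
      intro s hs
      rw [hmem]
      intro i
      have habs : |s| = ε := by
        rcases hs with h | h <;> simp [h, abs_of_pos hεpos,
          abs_of_neg (neg_neg_iff_pos.2 hεpos)]
      rw [latticePair_add, latticePair_smul]
      by_cases hgi : g i = 0
      · rw [hv i hgi, mul_zero, add_zero]
        exact hg0 i
      · have hgpos : 0 < g i := lt_of_le_of_ne (hg0 i) (Ne.symm hgi)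
        have h1 : |s * latticePair (u i) v| ≤ g i := by
          rw [abs_mul, habs]
          have h2 : ε ≤ g i / (b i + 1) := by
            have h5 := hεδ i
            simpa only [hδ, if_neg hgi] using h5
          have h3 : ε * b i ≤ (g i / (b i + 1)) * b i :=
            mul_le_mul_of_nonneg_right h2 (abs_nonneg _)
          refine le_trans h3 ?_
          rw [div_mul_eq_mul_div, div_le_iff₀ (by positivity)]
          nlinarith [abs_nonneg (latticePair (u i) v)]
        have h4 := neg_abs_le (s * latticePair (u i) v)
        have heq : latticePair (u i) w + s * latticePair (u i) v + γ i
            = g i + s * latticePair (u i) v := by rw [hg]; ring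
        rw [heq]
        linarith
    have hp1 := hpert ε (Or.inl rfl)
    have hp2 := hpert (-ε) (Or.inr rfl)
    have hc1 := hc _ hp1
    have hc2 := hc _ hp2
    simp only [map_add, map_smul, smul_eq_mul, hlw] at hc1 hc2
    have hlv : ℓ v = 0 := by nlinarith
    have hmem1 : w + ε • v ∈ ({w} : Set (Fin n → ℝ)) := by
      rw [hQ]
      exact ⟨hp1, by simp [map_add, hlw, hlv]⟩
    have heqw : w + ε • v = w := hmem1
    have hz : ε • v = 0 := by
      have := congrArg (· - w) heqw
      simpa [add_sub_cancel_left] using this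
    exact (smul_eq_zero.mp hz).resolve_left (ne_of_gt hεpos)
  -- rational span
  set uq : {i : Fin m // g i = 0} → Fin n → ℚ := fun i k => (u i.1 k : ℚ) with huq
  have hspan : Submodule.span ℚ (Set.range uq) = ⊤ := by
    apply span_top_of_pairing
    intro v hvq
    have hvr : (fun k => (v k : ℝ)) = 0 := by
      apply key
      intro i hgi
      have h1 := hvq ⟨i, hgi⟩
      have h2 : ((∑ k, uq ⟨i, hgi⟩ k * v k : ℚ) : ℝ) = 0 := by rw [h1]; norm_num
      rw [← h2]
      push_cast [latticePair, huq]
      rfl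
    funext k
    have h6 : (v k : ℝ) = 0 := by simpa using congrFun hvr k
    exact_mod_cast h6
  have hj : (fun k => if j = k then (1:ℚ) else 0) ∈ Submodule.span ℚ (Set.range uq) := by
    rw [hspan]; trivial
  obtain ⟨cf, hcf⟩ := (Submodule.mem_span_range_iff_exists_fun ℚ).1 hj
  -- compute w j
  have hwj : w j = ∑ i : {i : Fin m // g i = 0}, (cf i : ℝ) * latticePair (u i.1) w := by
    have hcoord : ∀ k, (∑ i : {i : Fin m // g i = 0}, (cf i : ℝ) * (u i.1 k : ℝ))
        = if j = k then (1:ℝ) else 0 := by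
      intro k
      have h1 := congrFun hcf k
      simp only [Finset.sum_apply, Pi.smul_apply, smul_eq_mul] at h1
      have h2 := congrArg (fun q : ℚ => (q : ℝ)) h1
      simp only [huq] at h2
      push_cast [apply_ite (fun q : ℚ => (q : ℝ))] at h2
      exact h2
    calc w j = ∑ k, (if j = k then (1:ℝ) else 0) * w k := by simp
      _ = ∑ k, (∑ i : {i : Fin m // g i = 0}, (cf i : ℝ) * (u i.1 k : ℝ)) * w k := by
          refine Finset.sum_congr rfl fun k _ => ?_
          rw [hcoord k]
      _ = ∑ i : {i : Fin m // g i = 0}, (cf i : ℝ) * latticePair (u i.1) w := by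
          simp only [Finset.sum_mul, latticePair, Finset.mul_sum]
          rw [Finset.sum_comm]
          exact Finset.sum_congr rfl fun i _ => Finset.sum_congr rfl fun k _ => by ring
  rw [hwj]
  refine AddSubgroup.sum_mem Γ fun i _ => ?_
  have hγi : latticePair (u i.1) w = -γ i.1 := by
    have h8 : latticePair (u i.1) w + γ i.1 = 0 := i.2
    linarith
  have h9 := rat_mul_mem Γ hdiv (cf i) (AddSubgroup.neg_mem Γ (hγ i.1))
  rwa [← hγi] at h9
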